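/- If the second dual A** with the first Arens product is approximately amenable, then A is approximately amenable. -/

import Mathlib

/-!
A derivation `D : A → X*` has a second adjoint `D'' : A** → X***`, which is a derivation for the
first-Arens bimodule structure of `X*** = (X*)**` over `A**`. Embedded in its bidual it becomes a
derivation into a dual `A**`-bimodule, hence approximately inner by hypothesis. Restricting the
approximating net from `X*****` to `X ⊆ X****` yields a net in `X*`; this restriction intertwines
`a ∈ A` with its image in `A**`, so the net shows that `D` is approximately inner.
-/

open ContinuousLinearMap Filter Topology

open ContinuousLinearMap Filter Topology

/-- A Banach `A`-bimodule: a complete normed `ℂ`-space with commuting continuous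
left and right `A`-actions, jointly bounded and bilinear. -/
structure BBimod (A : Type) [NonUnitalNormedRing A] [NormedSpace ℂ A] where
  carrier : Type
  [grp : NormedAddCommGroup carrier]
  [mod : NormedSpace ℂ carrier]
  [complete : CompleteSpace carrier]
  lsmul : A → carrier →L[ℂ] carrier
  rsmul : A → carrier →L[ℂ] carrier
  lsmul_add : ∀ a b, lsmul (a + b) = lsmul a + lsmul b
  rsmul_add : ∀ a b, rsmul (a + b) = rsmul a + rsmul b
  lsmul_smul : ∀ (c : ℂ) (a), lsmul (c • a) = c • lsmul a
  rsmul_smul : ∀ (c : ℂ) (a), rsmul (c • a) = c • rsmul a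
  lsmul_mul : ∀ a b, lsmul (a * b) = (lsmul a).comp (lsmul b)
  rsmul_mul : ∀ a b, rsmul (a * b) = (rsmul b).comp (rsmul a)
  lsmul_rsmul : ∀ a b, (lsmul a).comp (rsmul b) = (rsmul b).comp (lsmul a)
  bound : ∃ C : ℝ, ∀ a, ‖lsmul a‖ ≤ C * ‖a‖ ∧ ‖rsmul a‖ ≤ C * ‖a‖

attribute [instance] BBimod.grp BBimod.mod BBimod.complete

variable {A : Type} [NonUnitalNormedRing A] [NormedSpace ℂ A]

/-- The dual of a Banach bimodule, with the canonical dual actions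
`⟨u, Λ·a⟩ = ⟨a·u, Λ⟩` and `⟨u, a·Λ⟩ = ⟨u·a, Λ⟩`. -/
noncomputable def BBimod.dual (M : BBimod A) : BBimod A where
  carrier := M.carrier →L[ℂ] ℂ
  lsmul a := (compL ℂ M.carrier M.carrier ℂ).flip (M.rsmul a)
  rsmul a := (compL ℂ M.carrier M.carrier ℂ).flip (M.lsmul a)
  lsmul_add a b := by ext Λ x; simp [M.rsmul_add]
  rsmul_add a b := by ext Λ x; simp [M.lsmul_add]
  lsmul_smul c a := by ext Λ x; simp [M.rsmul_smul]
  rsmul_smul c a := by ext Λ x; simp [M.lsmul_smul]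
  lsmul_mul a b := by ext Λ x; simp [M.rsmul_mul]
  rsmul_mul a b := by ext Λ x; simp [M.lsmul_mul]
  lsmul_rsmul a b := by
    ext Λ x
    have h : M.lsmul b (M.rsmul a x) = M.rsmul a (M.lsmul b x) := by
      have := congrArg (fun T : M.carrier →L[ℂ] M.carrier => T x) (M.lsmul_rsmul b a)
      simpa using this
    simp [h]
  bound := by
    obtain ⟨C, hC⟩ := M.bound
    refine ⟨C, fun a => ⟨?_, ?_⟩⟩
    · refine opNorm_le_bound _ ?_ fun Λ => ?_
      · exact le_trans (norm_nonneg _) (hC a).2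
      · calc ‖Λ.comp (M.rsmul a)‖ ≤ ‖Λ‖ * ‖M.rsmul a‖ := opNorm_comp_le _ _
          _ ≤ (C * ‖a‖) * ‖Λ‖ := by
              rw [mul_comm]
              exact mul_le_mul_of_nonneg_right (hC a).2 (norm_nonneg _)
    · refine opNorm_le_bound _ ?_ fun Λ => ?_
      · exact le_trans (norm_nonneg _) (hC a).1
      · calc ‖Λ.comp (M.lsmul a)‖ ≤ ‖Λ‖ * ‖M.lsmul a‖ := opNorm_comp_le _ _
          _ ≤ (C * ‖a‖) * ‖Λ‖ := by
              rw [mul_comm]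
              exact mul_le_mul_of_nonneg_right (hC a).1 (norm_nonneg _)

variable (A) [IsScalarTower ℂ A A] [SMulCommClass ℂ A A] [CompleteSpace A]

/-- `A` as a Banach bimodule over itself. -/
noncomputable def BBimod.base : BBimod A where
  carrier := A
  lsmul a := ContinuousLinearMap.mul ℂ A a
  rsmul a := (ContinuousLinearMap.mul ℂ A).flip a
  lsmul_add a b := by ext x; simp [add_mul]
  rsmul_add a b := by ext x; simp [mul_add]
  lsmul_smul c a := by ext x; simp [smul_mul_assoc]
  rsmul_smul c a := by ext x; simp [mul_smul_comm]
  lsmul_mul a b := by ext x; simp [mul_assoc]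
  rsmul_mul a b := by ext x; simp [mul_assoc]
  lsmul_rsmul a b := by ext x; simp [mul_assoc]
  bound := by
    refine ⟨1, fun a => ⟨?_, ?_⟩⟩
    · simpa using ContinuousLinearMap.opNorm_mul_apply_le ℂ A a
    · refine le_trans (opNorm_le_bound _ (norm_nonneg a) fun x => ?_) (by simp)
      simpa [mul_comm] using norm_mul_le x a


/-- The `n`-th dual `A^(n)` of `A` as a Banach `A`-bimodule. -/
noncomputable def iterDual : ℕ → BBimod A
  | 0 => BBimod.base A
  | n + 1 => (iterDual n).dual

variable {A}

/-- `D` is a derivation from `A` into the Banach bimodule `M`. -/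
def IsDerivation (M : BBimod A) (D : A →L[ℂ] M.carrier) : Prop :=
  ∀ a b : A, D (a * b) = M.lsmul a (D b) + M.rsmul b (D a)

/-- `D` is an inner derivation. -/
def IsInner (M : BBimod A) (D : A →L[ℂ] M.carrier) : Prop :=
  ∃ x : M.carrier, ∀ a : A, D a = M.lsmul a x - M.rsmul a x

/-- `D` is approximately inner: there is a net `(x_i)` in `M` with
`D a = lim_i (a·x_i − x_i·a)` for every `a`. -/
def IsApproxInner (M : BBimod A) (D : A →L[ℂ] M.carrier) : Prop :=
  ∃ (ι : Type) (l : Filter ι) (x : ι → M.carrier), l.NeBot ∧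
    ∀ a : A, Tendsto (fun i => M.lsmul a (x i) - M.rsmul a (x i)) l (𝓝 (D a))

variable (A)

/-- `A` is weakly amenable. -/
def WeaklyAmenable : Prop :=
  ∀ D : A →L[ℂ] (iterDual A 1).carrier, IsDerivation (iterDual A 1) D → IsInner (iterDual A 1) D

/-- `A` is approximately `n`-weakly amenable. -/
def ApproxNWeaklyAmenable (n : ℕ) : Prop :=
  ∀ D : A →L[ℂ] (iterDual A n).carrier,
    IsDerivation (iterDual A n) D → IsApproxInner (iterDual A n) D

/-- `A` is `n`-weakly amenable. -/
def NWeaklyAmenable (n : ℕ) : Prop :=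
  ∀ D : A →L[ℂ] (iterDual A n).carrier,
    IsDerivation (iterDual A n) D → IsInner (iterDual A n) D

/-- `A` is approximately weakly amenable. -/
def ApproxWeaklyAmenable : Prop := ApproxNWeaklyAmenable A 1

/-- `A` is approximately amenable: every continuous derivation into the dual of a
Banach `A`-bimodule is approximately inner. -/
def ApproxAmenable : Prop :=
  ∀ (X : BBimod A) (D : A →L[ℂ] X.dual.carrier), IsDerivation X.dual D → IsApproxInner X.dual D

section SecondDual
variable (A : Type) [NonUnitalNormedRing A] [NormedSpace ℂ A]
  [IsScalarTower ℂ A A] [SMulCommClass ℂ A A]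

/-- The map `f ↦ n □ f` entering the definition of the first Arens product. -/
noncomputable def arensAux (n : (A →L[ℂ] ℂ) →L[ℂ] ℂ) :
    (A →L[ℂ] ℂ) →L[ℂ] (A →L[ℂ] ℂ) :=
  (compL ℂ A (A →L[ℂ] ℂ) ℂ n).comp
    (((compL ℂ A (A →L[ℂ] A) (A →L[ℂ] ℂ)).flip (ContinuousLinearMap.mul ℂ A)).comp
      (compL ℂ A A ℂ))

/-- The first Arens product `m □ n` on the second dual of `A`. -/
noncomputable def arens (m n : (A →L[ℂ] ℂ) →L[ℂ] ℂ) : (A →L[ℂ] ℂ) →L[ℂ] ℂ :=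
  m.comp (arensAux A n)

variable {A}

lemma arens_add_left (m n p : (A →L[ℂ] ℂ) →L[ℂ] ℂ) :
    arens A (m + n) p = arens A m p + arens A n p := by
  ext f; simp [arens]

lemma arens_add_right (m n p : (A →L[ℂ] ℂ) →L[ℂ] ℂ) :
    arens A m (n + p) = arens A m n + arens A m p := by
  ext f; simp [arens, arensAux, map_add]

lemma arens_zero_left (m : (A →L[ℂ] ℂ) →L[ℂ] ℂ) : arens A 0 m = 0 := by
  ext f; simp [arens]

lemma arens_zero_right (m : (A →L[ℂ] ℂ) →L[ℂ] ℂ) : arens A m 0 = 0 := by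
  ext f
  have h0 : arensAux A (0 : (A →L[ℂ] ℂ) →L[ℂ] ℂ) f = 0 := by ext a; rfl
  show m (arensAux A 0 f) = 0
  rw [h0, map_zero]

lemma arens_smul_left (c : ℂ) (m n : (A →L[ℂ] ℂ) →L[ℂ] ℂ) :
    arens A (c • m) n = c • arens A m n := by
  ext f; simp [arens]

lemma arens_smul_right (c : ℂ) (m n : (A →L[ℂ] ℂ) →L[ℂ] ℂ) :
    arens A m (c • n) = c • arens A m n := by
  ext f
  have hs : arensAux A (c • n) f = c • arensAux A n f := by ext a; rfl
  show m (arensAux A (c • n) f) = c • m (arensAux A n f)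
  rw [hs, map_smul]

lemma arens_assoc (m n p : (A →L[ℂ] ℂ) →L[ℂ] ℂ) :
    arens A (arens A m n) p = arens A m (arens A n p) := by
  ext f
  show m (arensAux A n (arensAux A p f)) = m (arensAux A (arens A n p) f)
  congr 1
  ext a
  show n ((arensAux A p f).comp (ContinuousLinearMap.mul ℂ A a)) =
    n (arensAux A p (f.comp (ContinuousLinearMap.mul ℂ A a)))
  congr 1
  ext b
  show p (f.comp (ContinuousLinearMap.mul ℂ A (a * b))) =
    p ((f.comp (ContinuousLinearMap.mul ℂ A a)).comp (ContinuousLinearMap.mul ℂ A b))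
  congr 1
  ext c
  exact congrArg f (mul_assoc a b c)

lemma arens_norm (m n : (A →L[ℂ] ℂ) →L[ℂ] ℂ) : ‖arens A m n‖ ≤ ‖m‖ * ‖n‖ := by
  have hAux : ‖arensAux A n‖ ≤ ‖n‖ := by
    refine opNorm_le_bound _ (norm_nonneg n) fun f => ?_
    have hHf : ‖(((compL ℂ A (A →L[ℂ] A) (A →L[ℂ] ℂ)).flip
        (ContinuousLinearMap.mul ℂ A)).comp (compL ℂ A A ℂ)) f‖ ≤ ‖f‖ := by
      refine opNorm_le_bound _ (norm_nonneg f) fun a => ?_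
      show ‖f.comp (ContinuousLinearMap.mul ℂ A a)‖ ≤ ‖f‖ * ‖a‖
      calc ‖f.comp (ContinuousLinearMap.mul ℂ A a)‖
          ≤ ‖f‖ * ‖ContinuousLinearMap.mul ℂ A a‖ := opNorm_comp_le _ _
        _ ≤ ‖f‖ * ‖a‖ :=
            mul_le_mul_of_nonneg_left (ContinuousLinearMap.opNorm_mul_apply_le ℂ A a)
              (norm_nonneg f)
    calc ‖arensAux A n f‖
        ≤ ‖n‖ * ‖(((compL ℂ A (A →L[ℂ] A) (A →L[ℂ] ℂ)).flip
            (ContinuousLinearMap.mul ℂ A)).comp (compL ℂ A A ℂ)) f‖ := opNorm_comp_le _ _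
      _ ≤ ‖n‖ * ‖f‖ := mul_le_mul_of_nonneg_left hHf (norm_nonneg n)
  calc ‖arens A m n‖ ≤ ‖m‖ * ‖arensAux A n‖ := opNorm_comp_le _ _
    _ ≤ ‖m‖ * ‖n‖ := mul_le_mul_of_nonneg_left hAux (norm_nonneg m)

variable (A)

/-- The second dual `A**` of `A`, as a type synonym, equipped with the
first Arens product. -/
def SecondDual : Type := (A →L[ℂ] ℂ) →L[ℂ] ℂ

noncomputable instance : NormedAddCommGroup (SecondDual A) :=
  (inferInstance : NormedAddCommGroup ((A →L[ℂ] ℂ) →L[ℂ] ℂ))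

noncomputable instance : NonUnitalNormedRing (SecondDual A) :=
  { (inferInstance : NormedAddCommGroup (SecondDual A)) with
    mul := arens A
    left_distrib := fun m n p => arens_add_right m n p
    right_distrib := fun m n p => arens_add_left m n p
    zero_mul := fun m => arens_zero_left m
    mul_zero := fun m => arens_zero_right m
    mul_assoc := fun m n p => arens_assoc m n p
    norm_mul_le := fun m n => arens_norm m n }

noncomputable instance : NormedSpace ℂ (SecondDual A) :=
  (inferInstance : NormedSpace ℂ ((A →L[ℂ] ℂ) →L[ℂ] ℂ))

instance : CompleteSpace (SecondDual A) :=
  (inferInstance : CompleteSpace ((A →L[ℂ] ℂ) →L[ℂ] ℂ))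

instance : IsScalarTower ℂ (SecondDual A) (SecondDual A) :=
  ⟨fun c m n => arens_smul_left c m n⟩

instance : SMulCommClass ℂ (SecondDual A) (SecondDual A) :=
  ⟨fun c m n => (arens_smul_right c m n).symm⟩

/-- The canonical embedding of `A` into its second dual. -/
noncomputable def canEmb : A →L[ℂ] SecondDual A := ContinuousLinearMap.apply ℂ ℂ

end SecondDual

noncomputable def ContinuousLinearMap.dualMap {𝕜 E F : Type*} [NontriviallyNormedField 𝕜]
    [NormedAddCommGroup E] [NormedSpace 𝕜 E] [NormedAddCommGroup F] [NormedSpace 𝕜 F]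
    (T : E →L[𝕜] F) : (F →L[𝕜] 𝕜) →L[𝕜] E →L[𝕜] 𝕜 :=
  (compL 𝕜 E F 𝕜).flip T

namespace BBimod

section Morphisms

variable {A B C : Type} [NonUnitalNormedRing A] [NormedSpace ℂ A]
  [NonUnitalNormedRing B] [NormedSpace ℂ B] [NonUnitalNormedRing C] [NormedSpace ℂ C]

noncomputable def rsmulCLM (M : BBimod A) : A →L[ℂ] M.carrier →L[ℂ] M.carrier :=
  LinearMap.mkContinuousOfExistsBound ⟨⟨M.rsmul, M.rsmul_add⟩, M.rsmul_smul⟩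
    (M.bound.imp fun _ hC a => (hC a).2)

@[simp] lemma rsmulCLM_apply (M : BBimod A) (a : A) : M.rsmulCLM a = M.rsmul a := rfl

noncomputable def ofActions (E : Type) [NormedAddCommGroup E] [NormedSpace ℂ E] [CompleteSpace E]
    (L R : B →L[ℂ] E →L[ℂ] E) (hL : ∀ a b, L (a * b) = (L a).comp (L b))
    (hR : ∀ a b, R (a * b) = (R b).comp (R a))
    (hLR : ∀ a b, (L a).comp (R b) = (R b).comp (L a)) : BBimod B where
  carrier := E
  lsmul := L
  rsmul := R
  lsmul_add := map_add L
  rsmul_add := map_add R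
  lsmul_smul := map_smul L
  rsmul_smul := map_smul R
  lsmul_mul := hL
  rsmul_mul := hR
  lsmul_rsmul := hLR
  bound := ⟨max ‖L‖ ‖R‖, fun a =>
    ⟨(L.le_opNorm a).trans (by gcongr; exact le_max_left _ _),
     (R.le_opNorm a).trans (by gcongr; exact le_max_right _ _)⟩⟩

/-- `T` is a bimodule map from `M` to `N` regarded as an `A`-bimodule through `φ`. -/
def Intertwines (φ : A → B) (M : BBimod A) (N : BBimod B) (T : M.carrier →L[ℂ] N.carrier) :
    Prop :=
  ∀ a, T.comp (M.lsmul a) = (N.lsmul (φ a)).comp T ∧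
    T.comp (M.rsmul a) = (N.rsmul (φ a)).comp T

lemma Intertwines.comp {φ : A → B} {ψ : B → C} {M : BBimod A} {N : BBimod B} {P : BBimod C}
    {T : M.carrier →L[ℂ] N.carrier} {S : N.carrier →L[ℂ] P.carrier}
    (hT : Intertwines φ M N T) (hS : Intertwines ψ N P S) :
    Intertwines (ψ ∘ φ) M P (S.comp T) :=
  fun a => ⟨by rw [comp_assoc, (hT a).1, ← comp_assoc, (hS (φ a)).1, comp_assoc]; rfl,
    by rw [comp_assoc, (hT a).2, ← comp_assoc, (hS (φ a)).2, comp_assoc]; rfl⟩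

noncomputable def toBidual (M : BBimod A) : M.carrier →L[ℂ] M.dual.dual.carrier :=
  NormedSpace.inclusionInDoubleDual ℂ M.carrier

lemma intertwines_toBidual (M : BBimod A) : Intertwines id M M.dual.dual M.toBidual :=
  fun _ => ⟨rfl, rfl⟩

end Morphisms

section Arens

variable {A : Type} [NonUnitalNormedRing A] [NormedSpace ℂ A]

/-- The first-Arens action of `A**` on `M*`: `(m · Φ)(y) = m(a ↦ Φ(y·a))`. -/
noncomputable def arensSmul (M : BBimod A) (m : (A →L[ℂ] ℂ) →L[ℂ] ℂ) :
    (M.carrier →L[ℂ] ℂ) →L[ℂ] M.carrier →L[ℂ] ℂ :=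
  (compL ℂ M.carrier (A →L[ℂ] ℂ) ℂ m).comp
    (((compL ℂ M.carrier (A →L[ℂ] M.carrier) (A →L[ℂ] ℂ)).flip M.rsmulCLM.flip).comp
      (compL ℂ A M.carrier ℂ))

lemma norm_arensSmul_le (M : BBimod A) (m : (A →L[ℂ] ℂ) →L[ℂ] ℂ) :
    ‖M.arensSmul m‖ ≤ ‖M.rsmulCLM‖ * ‖m‖ := by
  refine opNorm_le_bound _ (by positivity) fun Φ => opNorm_le_bound _ (by positivity) fun y => ?_
  calc ‖M.arensSmul m Φ y‖ ≤ ‖m‖ * (‖Φ‖ * (‖M.rsmulCLM.flip‖ * ‖y‖)) := by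
        refine (m.le_opNorm _).trans (mul_le_mul_of_nonneg_left ?_ (norm_nonneg m))
        exact (Φ.opNorm_comp_le _).trans
          (mul_le_mul_of_nonneg_left (M.rsmulCLM.flip.le_opNorm y) (norm_nonneg Φ))
    _ = ‖M.rsmulCLM‖ * ‖m‖ * ‖Φ‖ * ‖y‖ := by rw [opNorm_flip]; ring

noncomputable def arensSmulCLM (M : BBimod A) :
    ((A →L[ℂ] ℂ) →L[ℂ] ℂ) →L[ℂ] M.dual.carrier →L[ℂ] M.dual.carrier :=
  LinearMap.mkContinuous ⟨⟨M.arensSmul, fun _ _ => rfl⟩, fun _ _ => rfl⟩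
    ‖M.rsmulCLM‖ M.norm_arensSmul_le

lemma arensSmul_dual_rsmul (M : BBimod A) (m : (A →L[ℂ] ℂ) →L[ℂ] ℂ) (a : A)
    (Φ : M.carrier →L[ℂ] ℂ) :
    M.arensSmul m (M.dual.rsmul a Φ) = M.dual.rsmul a (M.arensSmul m Φ) := by
  ext y
  refine congrArg m (ext fun b => ?_)
  show Φ (M.lsmul a (M.rsmul b y)) = Φ (M.rsmul b (M.lsmul a y))
  exact congrArg Φ (DFunLike.congr_fun (M.lsmul_rsmul a b) y)

noncomputable def arensRightSmulCLM (M : BBimod A) :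
    ((A →L[ℂ] ℂ) →L[ℂ] ℂ) →L[ℂ] M.dual.dual.carrier →L[ℂ] M.dual.dual.carrier :=
  (compL ℂ M.dual.carrier M.dual.carrier ℂ).flip.comp M.arensSmulCLM

lemma arensSmulCLM_comp_arensRightSmulCLM (M : BBimod A) (m n : (A →L[ℂ] ℂ) →L[ℂ] ℂ) :
    (M.dual.arensSmulCLM m).comp (M.arensRightSmulCLM n)
      = (M.arensRightSmulCLM n).comp (M.dual.arensSmulCLM m) := by
  refine ContinuousLinearMap.ext fun (Ψ : (M.carrier →L[ℂ] ℂ) →L[ℂ] ℂ) =>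
    ContinuousLinearMap.ext fun (Φ : M.carrier →L[ℂ] ℂ) => congrArg m (ext fun a => ?_)
  exact congrArg Ψ (M.arensSmul_dual_rsmul n a Φ)

variable [IsScalarTower ℂ A A] [SMulCommClass ℂ A A]

lemma arensSmul_arens (M : BBimod A) (m n : (A →L[ℂ] ℂ) →L[ℂ] ℂ) :
    M.arensSmul (arens A m n) = (M.arensSmul m).comp (M.arensSmul n) := by
  ext Φ y
  refine congrArg m (ext fun a => congrArg n (ext fun b => ?_))
  simp [M.rsmul_mul]

lemma arensRightSmulCLM_arens (M : BBimod A) (m n : (A →L[ℂ] ℂ) →L[ℂ] ℂ) :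
    M.arensRightSmulCLM (arens A m n)
      = (M.arensRightSmulCLM n).comp (M.arensRightSmulCLM m) := by
  refine ContinuousLinearMap.ext fun (Ψ : (M.carrier →L[ℂ] ℂ) →L[ℂ] ℂ) => ?_
  show Ψ.comp (M.arensSmul (arens A m n)) = (Ψ.comp (M.arensSmul m)).comp (M.arensSmul n)
  rw [arensSmul_arens, comp_assoc]

/-- `M**` as an `A**`-bimodule: `m` acts on the left as on the dual of `M*`, and on the
right as the transpose of its action on `M*`. -/
noncomputable def arensBidual (M : BBimod A) : BBimod (SecondDual A) :=
  ofActions M.dual.dual.carrier M.dual.arensSmulCLM M.arensRightSmulCLM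
    M.dual.arensSmul_arens M.arensRightSmulCLM_arens M.arensSmulCLM_comp_arensRightSmulCLM

/-- On `canEmb A a` the Arens actions reduce to the dual actions of `a`. -/
lemma intertwines_toBidual_arensBidual (M : BBimod A) :
    Intertwines (canEmb A) M.dual (arensBidual M).dual M.dual.toBidual :=
  fun _ => ⟨rfl, rfl⟩

end Arens

end BBimod

open BBimod

section Derivations

variable {A B : Type} [NonUnitalNormedRing A] [NormedSpace ℂ A]
  [NonUnitalNormedRing B] [NormedSpace ℂ B]

lemma IsDerivation.comp_of_intertwines {M N : BBimod A} {D : A →L[ℂ] M.carrier}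
    {T : M.carrier →L[ℂ] N.carrier} (hD : IsDerivation M D) (hT : Intertwines id M N T) :
    IsDerivation N (T.comp D) := fun a b => by
  rw [comp_apply, hD, map_add, ← comp_apply T, (hT a).1, ← comp_apply T, (hT b).2]
  rfl

lemma IsApproxInner.of_dualMap {φ : A → B} {M : BBimod A} {N : BBimod B}
    {T : M.carrier →L[ℂ] N.carrier} (hT : Intertwines φ M N T)
    {D' : B →L[ℂ] N.dual.carrier} (hD' : IsApproxInner N.dual D')
    {D : A →L[ℂ] M.dual.carrier} (hD : ∀ a, T.dualMap (D' (φ a)) = D a) :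
    IsApproxInner M.dual D := by
  obtain ⟨ι, l, ξ, hl, hξ⟩ := hD'
  let P : N.dual.carrier →L[ℂ] M.dual.carrier := T.dualMap
  refine ⟨ι, l, fun i => P (ξ i), hl, fun a => ?_⟩
  have hcomm : ∀ ζ, P (N.dual.lsmul (φ a) ζ - N.dual.rsmul (φ a) ζ)
      = M.dual.lsmul a (P ζ) - M.dual.rsmul a (P ζ) := fun ζ => by
    rw [map_sub]
    congr 1
    · exact congrArg ζ.comp (hT a).2.symm
    · exact congrArg ζ.comp (hT a).1.symm
  rw [← hD]
  exact ((P.continuous.tendsto _).comp (hξ (φ a))).congr fun i => hcomm (ξ i)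

lemma ApproxAmenable.isApproxInner_toBidual_comp (h : ApproxAmenable B) {N : BBimod B}
    {D : B →L[ℂ] N.carrier} (hD : IsDerivation N D) :
    IsApproxInner N.dual.dual (N.toBidual.comp D) :=
  h N.dual _ (hD.comp_of_intertwines N.intertwines_toBidual)

end Derivations

section SecondAdjoint

variable {A : Type} [NonUnitalNormedRing A] [NormedSpace ℂ A]
  [IsScalarTower ℂ A A] [SMulCommClass ℂ A A]

lemma IsDerivation.dualMap_dualMap {M : BBimod A} {D : A →L[ℂ] M.carrier}
    (hD : IsDerivation M D) :
    IsDerivation (arensBidual M)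
      (D.dualMap.dualMap : SecondDual A →L[ℂ] M.dual.dual.carrier) := by
  -- Both sides are iterated evaluations: linearity of `m` and then of `n` reduces the identity
  -- to the Leibniz rule for `D`.
  intro (m : (A →L[ℂ] ℂ) →L[ℂ] ℂ) (n : (A →L[ℂ] ℂ) →L[ℂ] ℂ)
  refine ContinuousLinearMap.ext fun (Φ : M.carrier →L[ℂ] ℂ) => ?_
  show m (arensAux A n (Φ.comp D))
      = m ((n.comp D.dualMap).comp (M.dual.rsmulCLM.flip Φ)) + m ((M.arensSmul n Φ).comp D)
  rw [← map_add]
  refine congrArg m (ext fun a => ?_)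
  show n ((Φ.comp D).comp (ContinuousLinearMap.mul ℂ A a))
      = n ((M.dual.rsmul a Φ).comp D) + n (Φ.comp (M.rsmulCLM.flip (D a)))
  rw [← map_add]
  refine congrArg n (ext fun b => ?_)
  show Φ (D (a * b)) = Φ (M.lsmul a (D b)) + Φ (M.rsmul b (D a))
  rw [hD a b, map_add]

end SecondAdjoint

variable (A : Type) [NonUnitalNormedRing A] [NormedSpace ℂ A]
  [IsScalarTower ℂ A A] [SMulCommClass ℂ A A] [CompleteSpace A]

/-- If the second dual `A**`, with the first Arens product, is approximately
amenable, then `A` is approximately amenable. -/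
theorem approxAmenable_of_secondDual_approxAmenable
    (h : ApproxAmenable (SecondDual A)) : ApproxAmenable A := by
  intro X D hD
  have hD'' := h.isApproxInner_toBidual_comp hD.dualMap_dualMap
  -- `D''` extends `D`: restricted to `X`, `D'' (canEmb A a)` is `D a`.
  exact hD''.of_dualMap
    (X.intertwines_toBidual.comp (intertwines_toBidual_arensBidual X.dual)) fun a => rfl
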